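/- Let P and P̄ be transition kernels on S×A, r : S×A → ℝ, and γ ∈ [0,1). Let π* be an optimal deterministic policy for (r,P) with V* := V^{π*}(r,P), and let π̄ be an optimal deterministic policy for (r,P̄) with V̄ := V^{π̄}(r,P̄). Then ‖V* − V̄‖∞ ≤ max( ‖(I − γP̄^{π̄})⁻¹(γP^{π̄} − γP̄^{π̄})·V*‖∞ , ‖(I − γP̄^{π*})⁻¹(γP^{π*} − γP̄^{π*})·V*‖∞ ). -/

import Mathlib

open Finset Matrix

/-- Supremum norm of a vector indexed by a finite type. -/
noncomputable def supNorm {S : Type*} [Fintype S] (v : S → ℝ) : ℝ := ⨆ x, |v x|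

/-- The row-stochastic matrix `P^μ` induced by a deterministic policy `μ`. -/
noncomputable def polMat {S A : Type*} (P : S → A → S → ℝ) (μ : S → A) : Matrix S S ℝ :=
  Matrix.of fun x y => P x (μ x) y

/-- The value function `V^μ(r,P) = (I - γ P^μ)⁻¹ r^μ` of a deterministic policy `μ`. -/
noncomputable def polVal {S A : Type*} [Fintype S] [DecidableEq S]
    (γ : ℝ) (r : S → A → ℝ) (P : S → A → S → ℝ) (μ : S → A) : S → ℝ :=
  ((1 : Matrix S S ℝ) - γ • polMat P μ)⁻¹.mulVec (fun x => r x (μ x))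

/-!
Write `M^μ = I - γ P^μ`, `M̄^μ = I - γ P̄^μ`. Since `γ P^μ - γ P̄^μ = M̄^μ - M^μ`, the vectors in the bound
are `t^μ = V* - (M̄^μ)⁻¹ M^μ V*`. The resolvent `(M̄^μ)⁻¹` of a stochastic matrix is monotone
(a minimum principle). For `μ = π*` we have `M^{π*} V* = r^{π*}`, so `t^{π*} = V* - V̄^{π*} ≥ V* - V̄`
by optimality of `π̄`. For `μ = π̄`, Bellman optimality of `V*` gives `M^{π̄} V* ≥ r^{π̄}`, so by
monotonicity `t^{π̄} ≤ V* - (M̄^{π̄})⁻¹ r^{π̄} = V* - V̄`. A vector squeezed between `t^{π̄}` and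
`t^{π*}` has sup norm at most the larger of theirs.
-/

section SupNorm

variable {S : Type*} [Fintype S]

lemma supNorm_nonneg (v : S → ℝ) : 0 ≤ supNorm v :=
  Real.iSup_nonneg fun x => abs_nonneg (v x)

lemma abs_le_supNorm (v : S → ℝ) (x : S) : |v x| ≤ supNorm v :=
  le_ciSup (Set.finite_range fun x => |v x|).bddAbove x

lemma supNorm_le_max_of_le_of_le {a v b : S → ℝ} (ha : a ≤ v) (hb : v ≤ b) :
    supNorm v ≤ max (supNorm a) (supNorm b) :=
  Real.iSup_le
    (fun x => (abs_le_max_abs_abs (ha x) (hb x)).trans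
      (max_le_max (abs_le_supNorm a x) (abs_le_supNorm b x)))
    (le_max_of_le_left (supNorm_nonneg a))

end SupNorm

section Resolvent

variable {n : Type*} [Fintype n] [DecidableEq n] {Q : Matrix n n ℝ} {γ : ℝ}

lemma inv_mulVec_sub_mulVec {M : Matrix n n ℝ} (hM : IsUnit M.det) (N : Matrix n n ℝ)
    (v : n → ℝ) : M⁻¹ *ᵥ ((M - N) *ᵥ v) = v - M⁻¹ *ᵥ (N *ᵥ v) := by
  rw [sub_mulVec, mulVec_sub, mulVec_mulVec, nonsing_inv_mul _ hM, one_mulVec]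

/-- Minimum principle: at a minimum `i` of `w`, `((1 - γ • Q) *ᵥ w) i ≤ (1 - γ ∑ⱼ Q i j) * w i`. -/
lemma nonneg_of_nonneg_one_sub_smul_mulVec (hQ0 : ∀ i j, 0 ≤ Q i j) (hQ1 : ∀ i, ∑ j, Q i j ≤ 1)
    (hγ0 : 0 ≤ γ) (hγ1 : γ < 1) {w : n → ℝ} (hw : 0 ≤ (1 - γ • Q) *ᵥ w) : 0 ≤ w := by
  intro x
  have : Nonempty n := ⟨x⟩
  obtain ⟨i, hi⟩ := Finite.exists_min w
  have hrow : ((1 - γ • Q) *ᵥ w) i = w i - γ * ∑ j, Q i j * w j := by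
    simp only [sub_mulVec, one_mulVec, smul_mulVec, Pi.sub_apply, Pi.smul_apply, smul_eq_mul]
    rfl
  have hsum : (∑ j, Q i j) * w i ≤ ∑ j, Q i j * w j := by
    rw [sum_mul]
    exact sum_le_sum fun j _ => mul_le_mul_of_nonneg_left (hi j) (hQ0 i j)
  have hpos : 0 < 1 - γ * ∑ j, Q i j := by
    nlinarith [hQ1 i, sum_nonneg fun j (_ : j ∈ univ) => hQ0 i j]
  have hwi : 0 ≤ (1 - γ * ∑ j, Q i j) * w i := by
    have hwi := hw i
    rw [Pi.zero_apply, hrow] at hwi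
    nlinarith [mul_le_mul_of_nonneg_left hsum hγ0]
  exact (nonneg_of_mul_nonneg_right hwi hpos).trans (hi x)

lemma isUnit_det_one_sub_smul (hQ0 : ∀ i j, 0 ≤ Q i j) (hQ1 : ∀ i, ∑ j, Q i j ≤ 1)
    (hγ0 : 0 ≤ γ) (hγ1 : γ < 1) : IsUnit (1 - γ • Q).det := by
  rw [isUnit_iff_ne_zero, Ne, ← exists_mulVec_eq_zero_iff]
  rintro ⟨v, hv, hv0⟩
  have hle : 0 ≤ v := nonneg_of_nonneg_one_sub_smul_mulVec hQ0 hQ1 hγ0 hγ1 hv0.ge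
  have hge : 0 ≤ -v :=
    nonneg_of_nonneg_one_sub_smul_mulVec hQ0 hQ1 hγ0 hγ1 (by rw [mulVec_neg, hv0, neg_zero])
  exact hv (le_antisymm (neg_nonneg.mp hge) hle)

lemma one_sub_smul_inv_mulVec_mono (hQ0 : ∀ i j, 0 ≤ Q i j) (hQ1 : ∀ i, ∑ j, Q i j ≤ 1)
    (hγ0 : 0 ≤ γ) (hγ1 : γ < 1) {u v : n → ℝ} (h : u ≤ v) :
    (1 - γ • Q)⁻¹ *ᵥ u ≤ (1 - γ • Q)⁻¹ *ᵥ v := by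
  rw [← sub_nonneg]
  apply nonneg_of_nonneg_one_sub_smul_mulVec hQ0 hQ1 hγ0 hγ1
  rw [mulVec_sub, mulVec_mulVec, mulVec_mulVec,
    mul_nonsing_inv _ (isUnit_det_one_sub_smul hQ0 hQ1 hγ0 hγ1), one_mulVec, one_mulVec]
  exact sub_nonneg.mpr h

end Resolvent

section PolicyValue

variable {S A : Type*} [Fintype S] [DecidableEq S] {P : S → A → S → ℝ} {γ : ℝ}

lemma isUnit_det_one_sub_smul_polMat (hP0 : ∀ x a y, 0 ≤ P x a y)
    (hP1 : ∀ x a, ∑ y, P x a y = 1) (hγ0 : 0 ≤ γ) (hγ1 : γ < 1) (μ : S → A) :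
    IsUnit (1 - γ • polMat P μ).det :=
  isUnit_det_one_sub_smul (fun x => hP0 x (μ x)) (fun x => (hP1 x (μ x)).le) hγ0 hγ1

lemma one_sub_smul_polMat_inv_mulVec_mono (hP0 : ∀ x a y, 0 ≤ P x a y)
    (hP1 : ∀ x a, ∑ y, P x a y = 1) (hγ0 : 0 ≤ γ) (hγ1 : γ < 1) (μ : S → A) {u v : S → ℝ}
    (h : u ≤ v) : (1 - γ • polMat P μ)⁻¹ *ᵥ u ≤ (1 - γ • polMat P μ)⁻¹ *ᵥ v :=
  one_sub_smul_inv_mulVec_mono (fun x => hP0 x (μ x)) (fun x => (hP1 x (μ x)).le) hγ0 hγ1 h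

lemma one_sub_smul_polMat_mulVec_apply_congr {μ ν : S → A} {x : S} (h : μ x = ν x)
    (v : S → ℝ) : ((1 - γ • polMat P μ) *ᵥ v) x = ((1 - γ • polMat P ν) *ᵥ v) x := by
  simp [mulVec, dotProduct, polMat, h]

lemma one_sub_smul_polMat_mulVec_polVal (hP0 : ∀ x a y, 0 ≤ P x a y)
    (hP1 : ∀ x a, ∑ y, P x a y = 1) (hγ0 : 0 ≤ γ) (hγ1 : γ < 1) (r : S → A → ℝ) (μ : S → A) :
    (1 - γ • polMat P μ) *ᵥ polVal γ r P μ = fun x => r x (μ x) := by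
  rw [polVal, mulVec_mulVec,
    mul_nonsing_inv _ (isUnit_det_one_sub_smul_polMat hP0 hP1 hγ0 hγ1 μ), one_mulVec]

lemma le_polVal_of_one_sub_smul_polMat_mulVec_le (hP0 : ∀ x a y, 0 ≤ P x a y)
    (hP1 : ∀ x a, ∑ y, P x a y = 1) (hγ0 : 0 ≤ γ) (hγ1 : γ < 1) (r : S → A → ℝ) (μ : S → A)
    {V : S → ℝ} (hV : (1 - γ • polMat P μ) *ᵥ V ≤ fun x => r x (μ x)) : V ≤ polVal γ r P μ := by
  have hunit := isUnit_det_one_sub_smul_polMat hP0 hP1 hγ0 hγ1 μ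
  calc V = (1 - γ • polMat P μ)⁻¹ *ᵥ ((1 - γ • polMat P μ) *ᵥ V) := by
        rw [mulVec_mulVec, nonsing_inv_mul _ hunit, one_mulVec]
    _ ≤ polVal γ r P μ := one_sub_smul_polMat_inv_mulVec_mono hP0 hP1 hγ0 hγ1 μ hV

/-- Bellman optimality: if `μ` did better than `V*` at `x` for one step, switching the optimal
policy to `μ x` at `x` alone would improve on `V*`. -/
lemma le_one_sub_smul_polMat_mulVec_polVal_of_optimal (hP0 : ∀ x a y, 0 ≤ P x a y)
    (hP1 : ∀ x a, ∑ y, P x a y = 1) (hγ0 : 0 ≤ γ) (hγ1 : γ < 1) (r : S → A → ℝ) {πstar : S → A}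
    (hopt : ∀ μ : S → A, ∀ x, polVal γ r P μ x ≤ polVal γ r P πstar x) (μ : S → A) :
    (fun x => r x (μ x)) ≤ (1 - γ • polMat P μ) *ᵥ polVal γ r P πstar := by
  intro x
  by_contra! hlt
  set ν := Function.update πstar x (μ x)
  have hνx : ν x = μ x := Function.update_self ..
  have hbell := one_sub_smul_polMat_mulVec_polVal hP0 hP1 hγ0 hγ1 r πstar
  have hsub : (1 - γ • polMat P ν) *ᵥ polVal γ r P πstar ≤ fun z => r z (ν z) := by
    intro z
    change _ ≤ r z (ν z)
    by_cases hz : z = x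
    · subst hz
      rw [one_sub_smul_polMat_mulVec_apply_congr hνx, hνx]
      exact hlt.le
    · have hνz : ν z = πstar z := Function.update_of_ne hz ..
      rw [one_sub_smul_polMat_mulVec_apply_congr hνz, hbell, hνz]
  have heq : polVal γ r P ν = polVal γ r P πstar := le_antisymm (hopt ν)
    (le_polVal_of_one_sub_smul_polMat_mulVec_le hP0 hP1 hγ0 hγ1 r ν hsub)
  have hx := congrFun (one_sub_smul_polMat_mulVec_polVal hP0 hP1 hγ0 hγ1 r ν) x
  rw [heq, one_sub_smul_polMat_mulVec_apply_congr hνx, hνx] at hx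
  exact hlt.ne hx

end PolicyValue

theorem stmt17_general {S A : Type*} [Fintype S] [DecidableEq S]
    (P Pbar : S → A → S → ℝ)
    (hP0 : ∀ x a y, 0 ≤ P x a y) (hP1 : ∀ x a, ∑ y, P x a y = 1)
    (hPbar0 : ∀ x a y, 0 ≤ Pbar x a y) (hPbar1 : ∀ x a, ∑ y, Pbar x a y = 1)
    (r : S → A → ℝ) (γ : ℝ) (hγ0 : 0 ≤ γ) (hγ1 : γ < 1)
    (πstar πbar : S → A)
    (hopt : ∀ μ : S → A, ∀ x, polVal γ r P μ x ≤ polVal γ r P πstar x)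
    (hoptbar : ∀ μ : S → A, ∀ x, polVal γ r Pbar μ x ≤ polVal γ r Pbar πbar x)
    (Vstar Vbar : S → ℝ)
    (hVstar : Vstar = polVal γ r P πstar)
    (hVbar : Vbar = polVal γ r Pbar πbar) :
    supNorm (fun x => Vstar x - Vbar x) ≤
      max
        (supNorm (((1 : Matrix S S ℝ) - γ • polMat Pbar πbar)⁻¹.mulVec
          ((γ • polMat P πbar - γ • polMat Pbar πbar).mulVec Vstar)))
        (supNorm (((1 : Matrix S S ℝ) - γ • polMat Pbar πstar)⁻¹.mulVec
          ((γ • polMat P πstar - γ • polMat Pbar πstar).mulVec Vstar))) := by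
  subst hVstar hVbar
  have hperturb : ∀ μ : S → A,
      (1 - γ • polMat Pbar μ)⁻¹ *ᵥ ((γ • polMat P μ - γ • polMat Pbar μ) *ᵥ polVal γ r P πstar) =
        polVal γ r P πstar -
          (1 - γ • polMat Pbar μ)⁻¹ *ᵥ ((1 - γ • polMat P μ) *ᵥ polVal γ r P πstar) := fun μ => by
    rw [show γ • polMat P μ - γ • polMat Pbar μ = (1 - γ • polMat Pbar μ) - (1 - γ • polMat P μ)
      by abel, inv_mulVec_sub_mulVec (isUnit_det_one_sub_smul_polMat hPbar0 hPbar1 hγ0 hγ1 μ)]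
  apply supNorm_le_max_of_le_of_le
  · rw [hperturb]
    exact sub_le_sub_left (one_sub_smul_polMat_inv_mulVec_mono hPbar0 hPbar1 hγ0 hγ1 πbar
      (le_one_sub_smul_polMat_mulVec_polVal_of_optimal hP0 hP1 hγ0 hγ1 r hopt πbar)) _
  · rw [hperturb, one_sub_smul_polMat_mulVec_polVal hP0 hP1 hγ0 hγ1]
    exact sub_le_sub_left (hoptbar πstar) _

theorem stmt17 {S A : Type*} [Fintype S] [Nonempty S] [DecidableEq S] [Fintype A] [Nonempty A]
    (P Pbar : S → A → S → ℝ)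
    (hP0 : ∀ x a y, 0 ≤ P x a y) (hP1 : ∀ x a, ∑ y, P x a y = 1)
    (hPbar0 : ∀ x a y, 0 ≤ Pbar x a y) (hPbar1 : ∀ x a, ∑ y, Pbar x a y = 1)
    (r : S → A → ℝ) (γ : ℝ) (hγ0 : 0 ≤ γ) (hγ1 : γ < 1)
    (πstar πbar : S → A)
    (hopt : ∀ μ : S → A, ∀ x, polVal γ r P μ x ≤ polVal γ r P πstar x)
    (hoptbar : ∀ μ : S → A, ∀ x, polVal γ r Pbar μ x ≤ polVal γ r Pbar πbar x)
    (Vstar Vbar : S → ℝ)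
    (hVstar : Vstar = polVal γ r P πstar)
    (hVbar : Vbar = polVal γ r Pbar πbar) :
    supNorm (fun x => Vstar x - Vbar x) ≤
      max
        (supNorm (((1 : Matrix S S ℝ) - γ • polMat Pbar πbar)⁻¹.mulVec
          ((γ • polMat P πbar - γ • polMat Pbar πbar).mulVec Vstar)))
        (supNorm (((1 : Matrix S S ℝ) - γ • polMat Pbar πstar)⁻¹.mulVec
          ((γ • polMat P πstar - γ • polMat Pbar πstar).mulVec Vstar))) :=
  stmt17_general P Pbar hP0 hP1 hPbar0 hPbar1 r γ hγ0 hγ1 πstar πbar hopt hoptbar Vstar Vbar hVstar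
    hVbar
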